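/- The online algorithm that, upon arrival of an unhit α-fat object O, adds all integer points of level ℓ(O) in O to its hitting set, maintains a valid hitting set and adds at most (4α+1)^d points per round. -/

import Mathlib

noncomputable section

/-- Closed axis-parallel `d`-cube with lower corner `a` and side length `w`. -/
def Cube {d : ℕ} (a : Fin d → ℝ) (w : ℝ) : Set (Fin d → ℝ) :=
  {x | ∀ i, a i ≤ x i ∧ x i ≤ a i + w}

/-- Open axis-parallel `d`-cube with lower corner `a` and side length `w`. -/
def OpenCube {d : ℕ} (a : Fin d → ℝ) (w : ℝ) : Set (Fin d → ℝ) :=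
  {x | ∀ i, a i < x i ∧ x i < a i + w}

/-- The open box `(0,N)^d`. -/
def Box (d N : ℕ) : Set (Fin d → ℝ) :=
  {x | ∀ i, 0 < x i ∧ x i < N}

/-- The level of an integer point: minimum 2-adic valuation of its coordinates. -/
def level {d : ℕ} (q : Fin d → ℤ) : ℕ := ⨅ i, padicValInt 2 (q i)

/-- Embedding of integer points into `ℝ^d`. -/
def toRealPt {d : ℕ} (q : Fin d → ℤ) : Fin d → ℝ := fun i => (q i : ℝ)

/-- `w` is the out-width of `O`: side of the smallest enclosing axis-parallel cube. -/
def IsOutWidth {d : ℕ} (O : Set (Fin d → ℝ)) (w : ℝ) : Prop :=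
  (∃ a, O ⊆ Cube a w) ∧ ∀ w' a, O ⊆ Cube a w' → w ≤ w'

/-- `w` is the in-width of `O`: side of the largest inscribed axis-parallel cube. -/
def IsInWidth {d : ℕ} (O : Set (Fin d → ℝ)) (w : ℝ) : Prop :=
  (∃ a, Cube a w ⊆ O) ∧ ∀ w' a, Cube a w' ⊆ O → w' ≤ w

/-- `O` is `α`-fat: out-width at most `α` times in-width. -/
def IsFat {d : ℕ} (α : ℝ) (O : Set (Fin d → ℝ)) : Prop :=
  ∃ wo wi, IsOutWidth O wo ∧ IsInWidth O wi ∧ wo ≤ α * wi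

/-- Level of an object: maximum level of integer points inside it. -/
def objLevel {d : ℕ} (O : Set (Fin d → ℝ)) : ℕ :=
  sSup {l | ∃ q : Fin d → ℤ, toRealPt q ∈ O ∧ level q = l}

/-- Integer points of level exactly `l` inside `O`. -/
def lvlPts {d : ℕ} (l : ℕ) (O : Set (Fin d → ℝ)) : Set (Fin d → ℤ) :=
  {q | toRealPt q ∈ O ∧ level q = l}

/-- `H` hits `O`. -/
def hits {d : ℕ} (H : Set (Fin d → ℤ)) (O : Set (Fin d → ℝ)) : Prop :=
  ∃ q ∈ H, toRealPt q ∈ O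

/-- The hitting set maintained by the level-picking algorithm after `n` rounds. -/
def algoH {d : ℕ} (O : ℕ → Set (Fin d → ℝ)) : ℕ → Set (Fin d → ℤ)
  | 0 => ∅
  | n + 1 =>
      algoH O n ∪
        {q | ¬ hits (algoH O n) (O n) ∧ q ∈ lvlPts (objLevel (O n)) (O n)}

/-!
The points of maximal level `ℓ = ℓ(O)` in `O` all have coordinates divisible by `2^ℓ`.
Every cube of side `2^(ℓ+1)` contains a point whose coordinates are all divisible by `2^(ℓ+1)`,
i.e. a point of level `> ℓ`; so the in-width of `O` is below `2^(ℓ+1)`, and by fatness `O` lies in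
a cube of side at most `2α · 2^ℓ`. Such a cube contains at most `(2α+1)^d` points of the lattice
`2^ℓ ℤ^d`. Correctness holds because an unhit object is hit by the points of level `ℓ(O)` in it,
and this level is attained since levels of points in `(0,N)^d` are bounded.
-/

variable {d N : ℕ}

lemma Cube_mono {a : Fin d → ℝ} {w w' : ℝ} (h : w ≤ w') : Cube a w ⊆ Cube a w' :=
  fun _ hx i => ⟨(hx i).1, (hx i).2.trans (by linarith)⟩

lemma toRealPt_mem_Box {q : Fin d → ℤ} : toRealPt q ∈ Box d N ↔ ∀ i, 0 < q i ∧ q i < N := by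
  simp only [Box, toRealPt, Set.mem_ofPred_eq, Int.cast_pos]
  exact forall_congr' fun i => and_congr_right' (by exact_mod_cast Iff.rfl)

lemma level_le_padicValInt (q : Fin d → ℤ) (i : Fin d) : level q ≤ padicValInt 2 (q i) :=
  ciInf_le (OrderBot.bddBelow _) i

lemma pow_dvd_of_le_level {q : Fin d → ℤ} {ℓ : ℕ} (h : ℓ ≤ level q) (i : Fin d) :
    (2 : ℤ) ^ ℓ ∣ q i := by
  exact_mod_cast (padicValInt_dvd_iff (p := 2) ℓ (q i)).mpr
    (Or.inr (h.trans (level_le_padicValInt q i)))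

lemma le_level_of_pow_dvd [Nonempty (Fin d)] {q : Fin d → ℤ} {ℓ : ℕ} (hq : ∀ i, q i ≠ 0)
    (h : ∀ i, (2 : ℤ) ^ ℓ ∣ q i) : ℓ ≤ level q :=
  le_ciInf fun i =>
    ((padicValInt_dvd_iff (p := 2) ℓ (q i)).mp (by exact_mod_cast h i)).resolve_left (hq i)

lemma level_le_of_mem_Box {q : Fin d → ℤ} (hq : toRealPt q ∈ Box d N) : level q ≤ N := by
  rcases isEmpty_or_nonempty (Fin d) with hd | ⟨⟨i⟩⟩
  · simp [level]
  · obtain ⟨hpos, hlt⟩ := toRealPt_mem_Box.mp hq i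
    have hpow : (2 : ℤ) ^ padicValInt 2 (q i) ≤ q i :=
      Int.le_of_dvd hpos (by exact_mod_cast padicValInt_dvd (p := 2) (q i))
    have hv : (padicValInt 2 (q i) : ℤ) < 2 ^ padicValInt 2 (q i) := by
      exact_mod_cast Nat.lt_two_pow_self
    have := level_le_padicValInt q i
    omega

section ObjLevel

variable {S : Set (Fin d → ℝ)}

lemma bddAbove_levels (hS : S ⊆ Box d N) :
    BddAbove {l | ∃ q : Fin d → ℤ, toRealPt q ∈ S ∧ level q = l} :=
  ⟨N, by rintro _ ⟨q, hq, rfl⟩; exact level_le_of_mem_Box (hS hq)⟩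

lemma level_le_objLevel (hS : S ⊆ Box d N) {q : Fin d → ℤ} (hq : toRealPt q ∈ S) :
    level q ≤ objLevel S :=
  le_csSup (bddAbove_levels hS) ⟨q, hq, rfl⟩

lemma lvlPts_objLevel_nonempty (hS : S ⊆ Box d N) (hne : ∃ q : Fin d → ℤ, toRealPt q ∈ S) :
    (lvlPts (objLevel S) S).Nonempty := by
  obtain ⟨q, hq⟩ := hne
  exact Nat.sSup_mem (s := {l | ∃ q : Fin d → ℤ, toRealPt q ∈ S ∧ level q = l})
    ⟨level q, q, hq, rfl⟩ (bddAbove_levels hS)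

end ObjLevel

section Lattice

def multiplesInCube (c : ℤ) (a : Fin d → ℝ) (L : ℝ) : Set (Fin d → ℤ) :=
  {q | (∀ i, c ∣ q i) ∧ toRealPt q ∈ Cube a L}

variable {c : ℤ} {a : Fin d → ℝ} {L : ℝ}

lemma multiplesInCube_nonempty (hc : 0 < c) (hL : (c : ℝ) ≤ L) :
    (multiplesInCube c a L).Nonempty := by
  have hcR : (0 : ℝ) < c := by exact_mod_cast hc
  refine ⟨fun i => c * ⌈a i / c⌉, fun i => dvd_mul_right _ _, fun i => ?_⟩
  have h1 : a i ≤ c * ⌈a i / c⌉ := (div_le_iff₀' hcR).mp (Int.le_ceil _)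
  have h2 : c * ⌈a i / c⌉ < a i + c := by
    have := Int.ceil_lt_add_one (a i / c)
    rwa [← sub_lt_iff_lt_add, lt_div_iff₀' hcR, mul_sub, mul_one, sub_lt_iff_lt_add] at this
  simp only [toRealPt, Int.cast_mul]
  exact ⟨h1, by linarith⟩

lemma multiplesInCube_subset_image (hc : 0 < c) :
    multiplesInCube c a L ⊆ (fun (m : Fin d → ℤ) i => c * m i) ''
      ↑(Fintype.piFinset fun i => Finset.Icc ⌈a i / c⌉ ⌊(a i + L) / c⌋) := by
  have hcR : (0 : ℝ) < c := by exact_mod_cast hc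
  rintro q ⟨hdvd, hq⟩
  refine ⟨fun i => q i / c, ?_, funext fun i => Int.mul_ediv_cancel' (hdvd i)⟩
  simp only [Finset.mem_coe, Fintype.mem_piFinset, Finset.mem_Icc]
  intro i
  rw [Int.ceil_le, Int.le_floor, Int.cast_div (hdvd i) (by exact_mod_cast hc.ne')]
  exact ⟨div_le_div_of_nonneg_right (hq i).1 hcR.le, div_le_div_of_nonneg_right (hq i).2 hcR.le⟩

lemma multiplesInCube_finite (hc : 0 < c) : (multiplesInCube c a L).Finite :=
  ((Finset.finite_toSet _).image _).subset (multiplesInCube_subset_image hc)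

lemma card_Icc_ceil_floor_le {x y : ℝ} (h : x ≤ y) :
    ((Finset.Icc ⌈x⌉ ⌊y⌋).card : ℝ) ≤ y - x + 1 := by
  have hmax : (((⌊y⌋ + 1 - ⌈x⌉).toNat : ℤ) : ℝ) = max ((⌊y⌋ + 1 - ⌈x⌉ : ℤ) : ℝ) 0 := by
    exact_mod_cast Int.toNat_eq_max _
  rw [Int.card_Icc, ← Int.cast_natCast, hmax]
  push_cast
  exact max_le (by linarith [Int.floor_le y, Int.le_ceil x]) (by linarith)

lemma ncard_multiplesInCube_le (hc : 0 < c) (hL : 0 ≤ L) :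
    ((multiplesInCube c a L).ncard : ℝ) ≤ (L / c + 1) ^ d := by
  set P := Fintype.piFinset fun i => Finset.Icc ⌈a i / c⌉ ⌊(a i + L) / c⌋
  have hcR : (0 : ℝ) < c := by exact_mod_cast hc
  have hcard : (multiplesInCube c a L).ncard ≤ P.card :=
    (Set.ncard_le_ncard (multiplesInCube_subset_image hc) ((Finset.finite_toSet _).image _)).trans
      ((Set.ncard_image_le (Finset.finite_toSet _)).trans_eq (Set.ncard_coe_finset _))
  calc ((multiplesInCube c a L).ncard : ℝ) ≤ P.card := by exact_mod_cast hcard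
    _ = ∏ i, ((Finset.Icc ⌈a i / c⌉ ⌊(a i + L) / c⌋).card : ℝ) := by
      rw [Fintype.card_piFinset]; push_cast; rfl
    _ ≤ ∏ _i : Fin d, (L / c + 1) := by
      refine Finset.prod_le_prod (fun _ _ => by positivity) fun i _ => ?_
      refine (card_Icc_ceil_floor_le (div_le_div_of_nonneg_right
        (le_add_of_nonneg_right hL : a i ≤ a i + L) hcR.le)).trans_eq (by ring)
    _ = (L / c + 1) ^ d := by simp

end Lattice

section Fat

variable {α : ℝ} {S : Set (Fin d → ℝ)}

lemma inWidth_lt_two_pow_objLevel [Nonempty (Fin d)] {wi : ℝ} (hS : S ⊆ Box d N)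
    (hin : IsInWidth S wi) : wi < 2 ^ (objLevel S + 1) := by
  by_contra! h
  obtain ⟨a, ha⟩ := hin.1
  obtain ⟨q, hdvd, hq⟩ := multiplesInCube_nonempty (a := a) (c := 2 ^ (objLevel S + 1))
    (by positivity) (by exact_mod_cast h)
  have hpos := toRealPt_mem_Box.mp (hS (ha hq))
  have := le_level_of_pow_dvd (fun i => (hpos i).1.ne') hdvd
  have := level_le_objLevel hS (ha hq)
  omega

lemma lvlPts_objLevel_subset_multiplesInCube [Nonempty (Fin d)] (hα : 0 ≤ α)
    (hS : S ⊆ Box d N) (hfat : IsFat α S) :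
    ∃ a, lvlPts (objLevel S) S ⊆ multiplesInCube (2 ^ objLevel S) a (2 * α * 2 ^ objLevel S) := by
  obtain ⟨wo, wi, ⟨⟨a, ha⟩, -⟩, hin, hwo⟩ := hfat
  have hwo' : wo ≤ 2 * α * 2 ^ objLevel S := calc
    wo ≤ α * wi := hwo
    _ ≤ α * 2 ^ (objLevel S + 1) :=
      mul_le_mul_of_nonneg_left (inWidth_lt_two_pow_objLevel hS hin).le hα
    _ = 2 * α * 2 ^ objLevel S := by ring
  exact ⟨a, fun q ⟨hq, hlev⟩ => ⟨pow_dvd_of_le_level hlev.ge, Cube_mono hwo' (ha hq)⟩⟩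

lemma lvlPts_objLevel_finite_and_ncard_le (hα : 0 ≤ α) (hS : S ⊆ Box d N) (hfat : IsFat α S) :
    (lvlPts (objLevel S) S).Finite ∧ ((lvlPts (objLevel S) S).ncard : ℝ) ≤ (2 * α + 1) ^ d := by
  rcases Nat.eq_zero_or_pos d with rfl | hd
  · exact ⟨Set.toFinite _, by simpa using Set.ncard_le_one_of_subsingleton (lvlPts (objLevel S) S)⟩
  have := Fin.pos_iff_nonempty.mp hd
  obtain ⟨a, hsub⟩ := lvlPts_objLevel_subset_multiplesInCube hα hS hfat
  have hc : (0 : ℤ) < 2 ^ objLevel S := by positivity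
  refine ⟨(multiplesInCube_finite hc).subset hsub, ?_⟩
  calc ((lvlPts (objLevel S) S).ncard : ℝ)
      ≤ (multiplesInCube (2 ^ objLevel S) a (2 * α * 2 ^ objLevel S)).ncard := by
        exact_mod_cast Set.ncard_le_ncard hsub (multiplesInCube_finite hc)
    _ ≤ (2 * α * 2 ^ objLevel S / ((2 ^ objLevel S : ℤ) : ℝ) + 1) ^ d :=
        ncard_multiplesInCube_le hc (by positivity)
    _ = (2 * α + 1) ^ d := by push_cast; field_simp

end Fat

section Algorithm

variable {O : ℕ → Set (Fin d → ℝ)}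

lemma hits_mono {H H' : Set (Fin d → ℤ)} {S : Set (Fin d → ℝ)} (h : hits H S) (hH : H ⊆ H') :
    hits H' S :=
  let ⟨q, hq, hqS⟩ := h
  ⟨q, hH hq, hqS⟩

lemma algoH_mono : Monotone (algoH O) :=
  monotone_nat_of_le_succ fun _ => Set.subset_union_left

lemma hits_algoH_succ {m : ℕ} (hS : O m ⊆ Box d N) (hne : ∃ q : Fin d → ℤ, toRealPt q ∈ O m) :
    hits (algoH O (m + 1)) (O m) := by
  by_cases h : hits (algoH O m) (O m)
  · exact hits_mono h Set.subset_union_left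
  · obtain ⟨q, hq, hlev⟩ := lvlPts_objLevel_nonempty hS hne
    exact ⟨q, Or.inr ⟨h, hq, hlev⟩, hq⟩

lemma algoH_succ_diff_subset (n : ℕ) :
    algoH O (n + 1) \ algoH O n ⊆ lvlPts (objLevel (O n)) (O n) :=
  fun _ ⟨hq, hqn⟩ => (hq.resolve_left hqn).2

end Algorithm

/-- the level-picking algorithm maintains a valid hitting set of all
objects seen so far, and adds at most `(4α+1)^d` points per round. -/
theorem algo_correct_and_cheap (d N : ℕ) (α : ℝ) (hα : 1 ≤ α)
    (O : ℕ → Set (Fin d → ℝ))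
    (hbox : ∀ n, O n ⊆ Box d N) (hfat : ∀ n, IsFat α (O n))
    (hint : ∀ n, ∃ q : Fin d → ℤ, toRealPt q ∈ O n) :
    (∀ n m, m < n → hits (algoH O n) (O m)) ∧
    (∀ n, ((algoH O (n + 1) \ algoH O n).ncard : ℝ) ≤ (4 * α + 1) ^ d) := by
  refine ⟨fun n m hmn => hits_mono (hits_algoH_succ (hbox m) (hint m)) (algoH_mono hmn),
    fun n => ?_⟩
  obtain ⟨hfin, hcard⟩ := lvlPts_objLevel_finite_and_ncard_le (by linarith) (hbox n) (hfat n)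
  calc ((algoH O (n + 1) \ algoH O n).ncard : ℝ)
      ≤ (lvlPts (objLevel (O n)) (O n)).ncard := by
        exact_mod_cast Set.ncard_le_ncard (algoH_succ_diff_subset n) hfin
    _ ≤ (2 * α + 1) ^ d := hcard
    _ ≤ (4 * α + 1) ^ d := pow_le_pow_left₀ (by linarith) (by linarith) d
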